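/- Let 𝔰𝔎_r be the unital associative ℂ-algebra generated by S₀, S₃, S₊, S₋ subject to the relations [S₀,S₋] = −2{S₋,S₋}, [S₀,S₊] = 16{S₃,S₋} − 16{S₋,S₋} + 2{S₊,S₋} − 4{S₃,S₃}, [S₊,S₋] = 2{S₀,S₃}, [S₀,S₃] = 2{S₃,S₋} − 8{S₋,S₋}, [S₃,S₊] = {S₀,S₊}, [S₃,S₋] = −{S₀,S₋}. Then the elements C₁ = S₀² + S₃² + ½{S₊,S₋} and C₂ = ½{S₊,S₋} + 2{S₋,S₃} + S₃² − 6{S₋,S₋} are central in 𝔰𝔎_r, i.e. they commute with each of S₀, S₃, S₊, S₋. -/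

import Mathlib

noncomputable section

/-- The free algebra on the four generators S₀, S₃, S₊, S₋. -/
abbrev FreeSk := FreeAlgebra ℂ (Fin 4)

namespace Sk

def S0 : FreeSk := FreeAlgebra.ι ℂ 0
def S3 : FreeSk := FreeAlgebra.ι ℂ 1
def Sp : FreeSk := FreeAlgebra.ι ℂ 2
def Sm : FreeSk := FreeAlgebra.ι ℂ 3

/-- Commutator [a,b] = ab − ba. -/
def com (a b : FreeSk) : FreeSk := a * b - b * a

/-- Anticommutator {a,b} = ab + ba. -/
def acom (a b : FreeSk) : FreeSk := a * b + b * a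

/-- The six defining relations of the rational degenerate Sklyanin algebra. -/
inductive Rel : FreeSk → FreeSk → Prop
  | r1 : Rel (com S0 Sm) (-(2 * acom Sm Sm))
  | r2 : Rel (com S0 Sp)
      (16 * acom S3 Sm - 16 * acom Sm Sm + 2 * acom Sp Sm - 4 * acom S3 S3)
  | r3 : Rel (com Sp Sm) (2 * acom S0 S3)
  | r4 : Rel (com S0 S3) (2 * acom S3 Sm - 8 * acom Sm Sm)
  | r5 : Rel (com S3 Sp) (acom S0 Sp)
  | r6 : Rel (com S3 Sm) (-(acom S0 Sm))

end Sk

/-- The rational degenerate Sklyanin algebra 𝔰𝔎_r. -/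
abbrev SklyaninR := RingQuot Sk.Rel

/-!
For a Casimir element `C` and a generator `x`, the cubic element `[C, x]` is an explicit
combination of the elements `[g, r]` and `{g, r}`, where `g` runs over the generators and `r` over
the relators (differences of the two sides of a defining relation). For `C₁` only the relations
for `[S₊,S₋]`, `[S₃,S₊]` and `[S₃,S₋]` are needed; all relations but the one for `[S₊,S₋]` make
`C₁ - C₂` central, and hence `C₂` as well.
-/

namespace Sk

variable {A : Type*} [Ring A] {s0 s3 sp sm : A}

/- Twice the paper's `C₁` and `C₂`, which avoids `1 / 2` and so makes sense in any ring. -/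
def casimir₁ (s0 s3 sp sm : A) : A := 2 * s0 ^ 2 + 2 * s3 ^ 2 + (sp * sm + sm * sp)

def casimir₂ (s3 sp sm : A) : A :=
  (sp * sm + sm * sp) + 4 * (sm * s3 + s3 * sm) + 2 * s3 ^ 2 - 24 * sm ^ 2

theorem commute_casimir₁
    (r3 : sp * sm - sm * sp = 2 * (s0 * s3 + s3 * s0))
    (r5 : s3 * sp - sp * s3 = s0 * sp + sp * s0)
    (r6 : s3 * sm - sm * s3 = -(s0 * sm + sm * s0)) :
    Commute (casimir₁ s0 s3 sp sm) s0 ∧ Commute (casimir₁ s0 s3 sp sm) s3 ∧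
      Commute (casimir₁ s0 s3 sp sm) sp ∧ Commute (casimir₁ s0 s3 sp sm) sm := by
  unfold Commute SemiconjBy casimir₁
  refine ⟨?_, ?_, ?_, ?_⟩
  · linear_combination (norm := noncomm_ring)
      (r3 * s3 - s3 * r3) + (r5 * sm - sm * r5) + (sp * r6 - r6 * sp)
  · linear_combination (norm := noncomm_ring)
      (r3 * s0 - s0 * r3) - (r5 * sm + sm * r5) - (r6 * sp + sp * r6)
  · linear_combination (norm := noncomm_ring)
      -2 * (s0 * r5 - r5 * s0) + 2 * (s3 * r5 + r5 * s3) - (r3 * sp + sp * r3)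
  · linear_combination (norm := noncomm_ring)
      2 * (s0 * r6 - r6 * s0) + 2 * (s3 * r6 + r6 * s3) + (r3 * sm + sm * r3)

theorem commute_casimir₁_sub_casimir₂
    (r1 : s0 * sm - sm * s0 = -(2 * (sm * sm + sm * sm)))
    (r2 : s0 * sp - sp * s0 =
      16 * (s3 * sm + sm * s3) - 16 * (sm * sm + sm * sm) + 2 * (sp * sm + sm * sp)
        - 4 * (s3 * s3 + s3 * s3))
    (r4 : s0 * s3 - s3 * s0 = 2 * (s3 * sm + sm * s3) - 8 * (sm * sm + sm * sm))
    (r5 : s3 * sp - sp * s3 = s0 * sp + sp * s0)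
    (r6 : s3 * sm - sm * s3 = -(s0 * sm + sm * s0)) :
    let D := casimir₁ s0 s3 sp sm - casimir₂ s3 sp sm
    Commute D s0 ∧ Commute D s3 ∧ Commute D sp ∧ Commute D sm := by
  unfold Commute SemiconjBy casimir₁ casimir₂
  refine ⟨?_, ?_, ?_, ?_⟩
  · linear_combination (norm := noncomm_ring)
      4 * (s3 * r1 + r1 * s3) - 16 * (r1 * sm + sm * r1) + 4 * (r4 * sm + sm * r4)
        - 8 * (r6 * sm - sm * r6)
  · linear_combination (norm := noncomm_ring)
      2 * (s0 * r4 + r4 * s0) + 4 * (s3 * r6 + r6 * s3) - 16 * (r1 * sm - sm * r1)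
        + 4 * (r4 * sm - sm * r4) - 16 * (r6 * sm + sm * r6)
  · linear_combination (norm := noncomm_ring)
      -2 * (s0 * r5 - r5 * s0) + 2 * (s3 * r2 - r2 * s3) - 4 * (r1 * sp - sp * r1)
        + 4 * (r2 * sm - sm * r2) + 2 * (r4 * sp - sp * r4) + 4 * (r5 * sm + sm * r5)
        + 4 * (r6 * sp + sp * r6)
  · linear_combination (norm := noncomm_ring)
      2 * (s0 * r1 + r1 * s0) - 4 * (r1 * sm - sm * r1) - 4 * (r6 * sm + sm * r6)

end Sk

/-- the elements C₁ = S₀² + S₃² + ½{S₊,S₋} and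
C₂ = ½{S₊,S₋} + 2{S₋,S₃} + S₃² − 6{S₋,S₋} are central in 𝔰𝔎_r. -/
theorem stmt17 :
    let m := RingQuot.mkAlgHom ℂ Sk.Rel
    let s0 := m Sk.S0; let s3 := m Sk.S3; let sp := m Sk.Sp; let sm := m Sk.Sm
    let C₁ := s0 ^ 2 + s3 ^ 2 + (1 / 2 : ℂ) • (sp * sm + sm * sp)
    let C₂ := (1 / 2 : ℂ) • (sp * sm + sm * sp) + 2 * (sm * s3 + s3 * sm) + s3 ^ 2
      - 6 * (sm * sm + sm * sm)
    (Commute C₁ s0 ∧ Commute C₁ s3 ∧ Commute C₁ sp ∧ Commute C₁ sm) ∧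
    (Commute C₂ s0 ∧ Commute C₂ s3 ∧ Commute C₂ sp ∧ Commute C₂ sm) := by
  intro m s0 s3 sp sm C₁ C₂
  have rel {x y : FreeSk} (h : Sk.Rel x y) : m x = m y := RingQuot.mkAlgHom_rel ℂ h
  have r1 := rel .r1; have r2 := rel .r2; have r3 := rel .r3
  have r4 := rel .r4; have r5 := rel .r5; have r6 := rel .r6
  simp only [Sk.com, Sk.acom, map_sub, map_mul, map_add, map_neg, map_ofNat]
    at r1 r2 r3 r4 r5 r6
  have hC₁ : C₁ = (1 / 2 : ℂ) • Sk.casimir₁ s0 s3 sp sm := by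
    simp only [C₁, Sk.casimir₁, ← Nat.ofNat_nsmul_eq_mul]
    module
  have hC₂ : C₂ = (1 / 2 : ℂ) • Sk.casimir₂ s3 sp sm := by
    simp only [C₂, Sk.casimir₂, ← Nat.ofNat_nsmul_eq_mul, pow_two]
    module
  obtain ⟨c₁s0, c₁s3, c₁sp, c₁sm⟩ := Sk.commute_casimir₁ r3 r5 r6
  obtain ⟨ds0, ds3, dsp, dsm⟩ := Sk.commute_casimir₁_sub_casimir₂ r1 r2 r4 r5 r6
  have c₂ {x : SklyaninR} (c₁ : Commute (Sk.casimir₁ s0 s3 sp sm) x)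
      (d : Commute (Sk.casimir₁ s0 s3 sp sm - Sk.casimir₂ s3 sp sm) x) :
      Commute C₂ x := by
    rw [hC₂, ← sub_sub_cancel (Sk.casimir₁ s0 s3 sp sm) (Sk.casimir₂ s3 sp sm)]
    exact (c₁.sub_left d).smul_left _
  rw [hC₁]
  exact ⟨⟨c₁s0.smul_left _, c₁s3.smul_left _, c₁sp.smul_left _, c₁sm.smul_left _⟩,
    ⟨c₂ c₁s0 ds0, c₂ c₁s3 ds3, c₂ c₁sp dsp, c₂ c₁sm dsm⟩⟩
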